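/- arXiv:1904.01122 — 2 statements merged into one kernel-verified Lean document; each statement's English description precedes it below -/
import Mathlib

section
/- Let U ⊆ ℝ³ be open, let α > 0, let ζ : U → ℝ³ be twice continuously differentiable with everywhere invertible Jacobian Dζ and 𝒥 = det Dζ > 0, set 𝒜 = [Dζ]^{-1}, and let w : U → (0,∞) be continuously differentiable. Then for each i ∈ {1,2,3}: Σ_k ∂_k( w^{1+α} 𝒜^k_i 𝒥^{-1/α} ) = (1+α) w^α Σ_k 𝒜^k_i ∂_k( w 𝒥^{-1/α} ) everywhere on U. -/
/-!
Put `ψ = w 𝒥^{-1/α}`. Then `w^{1+α} 𝒜 𝒥^{-1/α} = ψ^{1+α} 𝒥 𝒜 = ψ^{1+α} adj (Dζ)` and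
`ψ^α = w^α 𝒥⁻¹`. The `i`-th column of `adj (Dζ)` is the cross product `∇ζ^{i+1} × ∇ζ^{i+2}`, which
is divergence free by the symmetry of second derivatives (the Piola identity). So the divergence of
`ψ^{1+α} adj (Dζ)_{·i}` is `(1+α) ψ^α Σ_k adj (Dζ)_{ki} ∂_k ψ = (1+α) w^α Σ_k 𝒜^k_i ∂_k ψ`.
-/

/-- Partial derivative `∂_j f` of a scalar function on `ℝ³`. -/
noncomputable def pd (j : Fin 3) (f : (Fin 3 → ℝ) → ℝ) (x : Fin 3 → ℝ) : ℝ :=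
  fderiv ℝ f x (Pi.single j 1)

/-- Jacobian matrix `Dζ`, entries `[Dζ]^i_j = ∂_j ζ^i`. -/
noncomputable def jacM (ζ : (Fin 3 → ℝ) → (Fin 3 → ℝ)) (x : Fin 3 → ℝ) :
    Matrix (Fin 3) (Fin 3) ℝ :=
  Matrix.of fun i j => pd j (fun y => ζ y i) x

open Filter Topology Finset

section PartialDerivative

variable {f g : (Fin 3 → ℝ) → ℝ} {x : Fin 3 → ℝ}

theorem pd_congr_of_eventuallyEq (h : f =ᶠ[𝓝 x] g) (k : Fin 3) : pd k f x = pd k g x := by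
  rw [pd, pd, h.fderiv_eq]

theorem pd_sub (hf : DifferentiableAt ℝ f x) (hg : DifferentiableAt ℝ g x) (k : Fin 3) :
    pd k (fun y => f y - g y) x = pd k f x - pd k g x := by
  simp [pd, fderiv_fun_sub hf hg]

theorem pd_mul (hf : DifferentiableAt ℝ f x) (hg : DifferentiableAt ℝ g x) (k : Fin 3) :
    pd k (fun y => f y * g y) x = pd k f x * g x + f x * pd k g x := by
  simp [pd, fderiv_fun_mul hf hg]
  ring

theorem pd_rpow_const (hf : DifferentiableAt ℝ f x) (hx : f x ≠ 0) (p : ℝ) (k : Fin 3) :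
    pd k (fun y => f y ^ p) x = p * f x ^ (p - 1) * pd k f x := by
  simp [pd, (hf.hasFDerivAt.rpow_const (p := p) (Or.inl hx)).fderiv, mul_assoc]

theorem ContDiffAt.differentiableAt_pd (hf : ContDiffAt ℝ 2 f x) (k : Fin 3) :
    DifferentiableAt ℝ (pd k f) x :=
  ((hf.fderiv_right (m := 1) (by norm_num)).differentiableAt one_ne_zero).clm_apply
    (differentiableAt_const _)

theorem ContDiffAt.pd_pd_comm (hf : ContDiffAt ℝ 2 f x) (j k : Fin 3) :
    pd j (pd k f) x = pd k (pd j f) x := by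
  have hf' := (hf.fderiv_right (m := 1) (by norm_num)).differentiableAt one_ne_zero
  have hpd_pd : ∀ j k,
      pd j (pd k f) x = fderiv ℝ (fderiv ℝ f) x (Pi.single j 1) (Pi.single k 1) := fun j k => by
    change fderiv ℝ (fun y => fderiv ℝ f y (Pi.single k 1)) x (Pi.single j 1) = _
    simp [fderiv_clm_apply hf' (differentiableAt_const _)]
  rw [hpd_pd, hpd_pd, hf.isSymmSndFDerivAt (by simp)]

end PartialDerivative

-- The `i`-th column of `adjugate M` is the cross product of rows `i + 1` and `i + 2`.
theorem Matrix.adjugate_fin_three_apply {R : Type*} [CommRing R] (M : Matrix (Fin 3) (Fin 3) R)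
    (k i : Fin 3) :
    M.adjugate k i =
      M (i + 1) (k + 1) * M (i + 2) (k + 2) - M (i + 1) (k + 2) * M (i + 2) (k + 1) := by
  fin_cases k <;> fin_cases i <;> simp [Matrix.adjugate_fin_three] <;> ring

section Piola

variable {a b : (Fin 3 → ℝ) → ℝ} {x : Fin 3 → ℝ}

-- `div (∇a × ∇b) = 0`
theorem sum_pd_gradient_cross_gradient_eq_zero (ha : ContDiffAt ℝ 2 a x)
    (hb : ContDiffAt ℝ 2 b x) :
    ∑ k : Fin 3, pd k
      (fun y => pd (k + 1) a y * pd (k + 2) b y - pd (k + 2) a y * pd (k + 1) b y) x = 0 := by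
  have hda := ha.differentiableAt_pd
  have hdb := hb.differentiableAt_pd
  have hterm : ∀ k j l : Fin 3,
      pd k (fun y => pd j a y * pd l b y - pd l a y * pd j b y) x =
        pd k (pd j a) x * pd l b x + pd j a x * pd k (pd l b) x -
          (pd k (pd l a) x * pd j b x + pd l a x * pd k (pd j b) x) := fun k j l => by
    rw [pd_sub ((hda j).fun_mul (hdb l)) ((hda l).fun_mul (hdb j)), pd_mul (hda j) (hdb l),
      pd_mul (hda l) (hdb j)]
  simp only [Fin.sum_univ_three, Fin.isValue, Fin.reduceAdd, hterm]
  rw [ha.pd_pd_comm 1 0, ha.pd_pd_comm 2 0, ha.pd_pd_comm 2 1, hb.pd_pd_comm 1 0,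
    hb.pd_pd_comm 2 0, hb.pd_pd_comm 2 1]
  ring

theorem sum_pd_adjugate_jacM_eq_zero {ζ : (Fin 3 → ℝ) → (Fin 3 → ℝ)} (hζ : ContDiffAt ℝ 2 ζ x)
    (i : Fin 3) :
    ∑ k : Fin 3, pd k (fun y => (jacM ζ y).adjugate k i) x = 0 := by
  simp only [Matrix.adjugate_fin_three_apply, jacM, Matrix.of_apply]
  exact sum_pd_gradient_cross_gradient_eq_zero (contDiffAt_pi.1 hζ _) (contDiffAt_pi.1 hζ _)

end Piola

theorem sum_pd_mul_of_sum_pd_eq_zero {g : (Fin 3 → ℝ) → ℝ} {F : Fin 3 → (Fin 3 → ℝ) → ℝ}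
    {x : Fin 3 → ℝ} (hg : DifferentiableAt ℝ g x) (hF : ∀ k, DifferentiableAt ℝ (F k) x)
    (hdiv : ∑ k, pd k (F k) x = 0) :
    ∑ k, pd k (fun y => g y * F k y) x = ∑ k, pd k g x * F k x := by
  simp only [pd_mul hg (hF _), sum_add_distrib, ← mul_sum, hdiv, mul_zero, add_zero]

section Jacobian

variable {ζ : (Fin 3 → ℝ) → (Fin 3 → ℝ)} {x : Fin 3 → ℝ}

theorem differentiableAt_adjugate_jacM (hζ : ContDiffAt ℝ 2 ζ x) (k i : Fin 3) :
    DifferentiableAt ℝ (fun y => (jacM ζ y).adjugate k i) x := by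
  have h r c : DifferentiableAt ℝ (fun y => jacM ζ y r c) x :=
    (contDiffAt_pi.1 hζ r).differentiableAt_pd c
  simp only [Matrix.adjugate_fin_three_apply]
  exact ((h _ _).fun_mul (h _ _)).fun_sub ((h _ _).fun_mul (h _ _))

theorem differentiableAt_det_jacM (hζ : ContDiffAt ℝ 2 ζ x) :
    DifferentiableAt ℝ (fun y => (jacM ζ y).det) x := by
  simp_rw [fun y => Matrix.det_eq_sum_mul_adjugate_row (jacM ζ y) 0]
  exact DifferentiableAt.fun_sum fun c _ =>
    ((contDiffAt_pi.1 hζ 0).differentiableAt_pd c).fun_mul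
      (differentiableAt_adjugate_jacM hζ c 0)

end Jacobian

theorem mul_rpow_neg_one_div_rpow {w J : ℝ} (hw : 0 ≤ w) (hJ : 0 ≤ J) (α p : ℝ) :
    (w * J ^ (-1 / α)) ^ p = w ^ p * J ^ (-p / α) := by
  rw [Real.mul_rpow hw (Real.rpow_nonneg hJ _), ← Real.rpow_mul hJ]
  ring_nf

theorem mul_rpow_neg_one_div_rpow_self {w J α : ℝ} (hw : 0 ≤ w) (hJ : 0 ≤ J) (hα : α ≠ 0) :
    (w * J ^ (-1 / α)) ^ α = w ^ α * J⁻¹ := by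
  rw [mul_rpow_neg_one_div_rpow hw hJ, neg_div, div_self hα, Real.rpow_neg_one]

theorem mul_rpow_neg_one_div_rpow_one_add {w J α : ℝ} (hw : 0 ≤ w) (hJ : 0 < J) (hα : α ≠ 0) :
    (w * J ^ (-1 / α)) ^ (1 + α) = w ^ (1 + α) * J ^ (-1 / α) * J⁻¹ := by
  rw [mul_rpow_neg_one_div_rpow hw hJ.le, show -(1 + α) / α = -1 / α + -1 by field_simp; ring,
    Real.rpow_add hJ, Real.rpow_neg_one, mul_assoc]

theorem Matrix.inv_apply_eq_inv_det_mul_adjugate {n K : Type*} [Fintype n] [DecidableEq n]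
    [Field K] (M : Matrix n n K) (k i : n) :
    M⁻¹ k i = M.det⁻¹ * M.adjugate k i := by
  rw [Matrix.inv_def, Ring.inverse_eq_inv, Matrix.smul_apply, smul_eq_mul]

theorem pressure_gradient_identity_general
    (U : Set (Fin 3 → ℝ)) (hU : IsOpen U) (α : ℝ) (hα : 0 < α)
    (ζ : (Fin 3 → ℝ) → (Fin 3 → ℝ)) (hζ : ContDiffOn ℝ 2 ζ U)
    (hJpos : ∀ x ∈ U, 0 < (jacM ζ x).det)
    (w : (Fin 3 → ℝ) → ℝ) (hw : ContDiffOn ℝ 1 w U) (hwpos : ∀ x ∈ U, 0 < w x) :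
    ∀ i : Fin 3, ∀ x ∈ U,
      (∑ k : Fin 3, pd k
          (fun y => w y ^ (1 + α) * ((jacM ζ y)⁻¹ k i) * ((jacM ζ y).det) ^ (-1 / α)) x)
        = (1 + α) * w x ^ α *
            ∑ k : Fin 3, ((jacM ζ x)⁻¹ k i) *
              pd k (fun y => w y * ((jacM ζ y).det) ^ (-1 / α)) x := by
  intro i x hx
  have hUx : U ∈ 𝓝 x := hU.mem_nhds hx
  have hζx : ContDiffAt ℝ 2 ζ x := hζ.contDiffAt hUx
  set ψ : (Fin 3 → ℝ) → ℝ := fun y => w y * (jacM ζ y).det ^ (-1 / α)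
  have hψx : DifferentiableAt ℝ ψ x :=
    ((hw.contDiffAt hUx).differentiableAt one_ne_zero).fun_mul
      ((differentiableAt_det_jacM hζx).rpow_const (Or.inl (hJpos x hx).ne'))
  have hψpos : 0 < ψ x := mul_pos (hwpos x hx) (Real.rpow_pos_of_pos (hJpos x hx) _)
  have hflux : ∀ k,
      pd k (fun y => w y ^ (1 + α) * ((jacM ζ y)⁻¹ k i) * (jacM ζ y).det ^ (-1 / α)) x =
      pd k (fun y => ψ y ^ (1 + α) * (jacM ζ y).adjugate k i) x := fun k => by
    refine pd_congr_of_eventuallyEq ?_ k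
    filter_upwards [hUx] with y hy
    rw [Matrix.inv_apply_eq_inv_det_mul_adjugate,
      mul_rpow_neg_one_div_rpow_one_add (hwpos y hy).le (hJpos y hy) hα.ne']
    ring
  calc _ = ∑ k, pd k (fun y => ψ y ^ (1 + α) * (jacM ζ y).adjugate k i) x := by
        simp only [hflux]
    _ = ∑ k, pd k (fun y => ψ y ^ (1 + α)) x * (jacM ζ x).adjugate k i :=
        sum_pd_mul_of_sum_pd_eq_zero (hψx.rpow_const (Or.inl hψpos.ne'))
          (fun k => differentiableAt_adjugate_jacM hζx k i) (sum_pd_adjugate_jacM_eq_zero hζx i)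
    _ = _ := by
      rw [mul_sum]
      refine sum_congr rfl fun k _ => ?_
      rw [pd_rpow_const hψx hψpos.ne', add_sub_cancel_left,
        mul_rpow_neg_one_div_rpow_self (hwpos x hx).le (hJpos x hx).le hα.ne',
        Matrix.inv_apply_eq_inv_det_mul_adjugate]
      ring

/-- **The pressure term is a perfect ζ-gradient.**  For `ζ : U → ℝ³` that is `C²` with
invertible Jacobian and `𝒥 = det Dζ > 0`, `𝒜 = [Dζ]⁻¹`, and `w > 0` of class `C¹`,
`Σ_k ∂_k (w^{1+α} 𝒜^k_i 𝒥^{-1/α}) = (1+α) w^α Σ_k 𝒜^k_i ∂_k (w 𝒥^{-1/α})` on `U`. -/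
theorem pressure_gradient_identity
    (U : Set (Fin 3 → ℝ)) (hU : IsOpen U) (α : ℝ) (hα : 0 < α)
    (ζ : (Fin 3 → ℝ) → (Fin 3 → ℝ)) (hζ : ContDiffOn ℝ 2 ζ U)
    (hinv : ∀ x ∈ U, IsUnit (jacM ζ x))
    (hJpos : ∀ x ∈ U, 0 < (jacM ζ x).det)
    (w : (Fin 3 → ℝ) → ℝ) (hw : ContDiffOn ℝ 1 w U) (hwpos : ∀ x ∈ U, 0 < w x) :
    ∀ i : Fin 3, ∀ x ∈ U,
      (∑ k : Fin 3, pd k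
          (fun y => w y ^ (1 + α) * ((jacM ζ y)⁻¹ k i) * ((jacM ζ y).det) ^ (-1 / α)) x)
        = (1 + α) * w x ^ α *
            ∑ k : Fin 3, ((jacM ζ x)⁻¹ k i) *
              pd k (fun y => w y * ((jacM ζ y).det) ^ (-1 / α)) x :=
  pressure_gradient_identity_general U hU α hα ζ hζ hJpos w hw hwpos
end

section
/- Let U ⊆ ℝ³ be open and let θ : U → ℝ³ be continuously differentiable such that ζ(x) = x + θ(x) has everywhere invertible Jacobian Dζ; set 𝒜 = [Dζ]^{-1}. Then for each k, i ∈ {1,2,3}, everywhere on U: 𝒜^k_i − δ^k_i = − 𝒜^k_j [∇_ζ θ]^i_j − 𝒜^k_j [Curl_ζ θ]^j_i − 𝒜^k_j 𝒜^l_p ∂_i θ^p ∂_l θ^j, where δ^k_i is the Kronecker delta and repeated indices j, l, p are summed from 1 to 3. -/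
open Matrix

theorem sub_one_eq_of_mul_one_add {R : Type*} [Ring R] {a m : R} (h : a * (1 + m) = 1) :
    a - 1 = -(a * m * a) - a * m * a * m := by
  have ham : a * m = 1 - a := by rw [mul_add, mul_one] at h; exact eq_sub_of_add_eq' h
  calc a - 1 = -(a * m * (a * (1 + m))) := by rw [h, mul_one, ham, neg_sub]
    _ = -(a * m * a) - a * m * a * m := by noncomm_ring

-- With `M = Dθ` and `A = 𝒜`, `M * A` is the ζ-gradient of `θ` and `M * A - (M * A)ᵀ` its ζ-curl.
theorem Matrix.sub_one_eq_of_mul_one_add {n R : Type*} [Fintype n] [DecidableEq n] [CommRing R]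
    {A M : Matrix n n R} (h : A * (1 + M) = 1) :
    A - 1 = -(A * (M * A)ᵀ) - A * (M * A - (M * A)ᵀ) - A * M * A * M := by
  rw [_root_.sub_one_eq_of_mul_one_add h, mul_sub]
  noncomm_ring

theorem pd_add {f g : (Fin 3 → ℝ) → ℝ} {x : Fin 3 → ℝ} (hf : DifferentiableAt ℝ f x)
    (hg : DifferentiableAt ℝ g x) (j : Fin 3) :
    pd j (fun y => f y + g y) x = pd j f x + pd j g x := by
  rw [pd, fderiv_fun_add hf hg]
  rfl

theorem jacM_add {ζ ξ : (Fin 3 → ℝ) → (Fin 3 → ℝ)} {x : Fin 3 → ℝ}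
    (hζ : DifferentiableAt ℝ ζ x) (hξ : DifferentiableAt ℝ ξ x) :
    jacM (fun y => ζ y + ξ y) x = jacM ζ x + jacM ξ x := by
  ext i j
  exact pd_add (differentiableAt_pi.1 hζ i) (differentiableAt_pi.1 hξ i) j

theorem jacM_id (x : Fin 3 → ℝ) : jacM id x = 1 := by
  ext i j
  simp [jacM, pd, (hasFDerivAt_apply i x).fderiv, one_apply, Pi.single_apply]

/-- **Decomposition of `𝒜 − I`.**  For `ζ = id + θ` with invertible Jacobian,
`𝒜^k_i − δ^k_i = −𝒜^k_j [∇_ζθ]^i_j − 𝒜^k_j [Curl_ζθ]^j_i − 𝒜^k_j 𝒜^l_p ∂_iθ^p ∂_lθ^j`. -/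
theorem Ainv_minus_id_decomposition
    (U : Set (Fin 3 → ℝ)) (hU : IsOpen U)
    (θ : (Fin 3 → ℝ) → (Fin 3 → ℝ)) (hθ : ContDiffOn ℝ 1 θ U)
    (hinv : ∀ x ∈ U, IsUnit (jacM (fun y => y + θ y) x)) :
    ∀ x ∈ U, ∀ k i : Fin 3,
      (jacM (fun y => y + θ y) x)⁻¹ k i - (if k = i then (1:ℝ) else 0)
        = -(∑ j : Fin 3, ((jacM (fun y => y + θ y) x)⁻¹ k j) *
              (∑ l : Fin 3, ((jacM (fun y => y + θ y) x)⁻¹ l j) *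
                pd l (fun y => θ y i) x))
          - (∑ j : Fin 3, ((jacM (fun y => y + θ y) x)⁻¹ k j) *
              (∑ s : Fin 3,
                (((jacM (fun y => y + θ y) x)⁻¹ s i) * pd s (fun y => θ y j) x
                  - ((jacM (fun y => y + θ y) x)⁻¹ s j) * pd s (fun y => θ y i) x)))
          - (∑ j : Fin 3, ∑ l : Fin 3, ∑ p : Fin 3,
              ((jacM (fun y => y + θ y) x)⁻¹ k j) *
                ((jacM (fun y => y + θ y) x)⁻¹ l p) *
                pd i (fun y => θ y p) x * pd l (fun y => θ y j) x) := by
  intro x hx k i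
  have hθx : DifferentiableAt ℝ θ x :=
    (hθ.differentiableOn one_ne_zero).differentiableAt (hU.mem_nhds hx)
  have hjac : jacM (fun y => y + θ y) x = 1 + jacM θ x := by
    rw [← jacM_id x]
    exact jacM_add differentiableAt_id hθx
  set A := (jacM (fun y => y + θ y) x)⁻¹
  have hA : A * (1 + jacM θ x) = 1 := by
    rw [← hjac]
    exact nonsing_inv_mul _ ((isUnit_iff_isUnit_det _).1 (hinv x hx))
  have hki := congrFun (congrFun (Matrix.sub_one_eq_of_mul_one_add hA) k) i
  simp only [Matrix.sub_apply, Matrix.neg_apply, one_apply, mul_apply, transpose_apply, jacM,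
    of_apply] at hki
  rw [hki]
  simp only [Fin.sum_univ_three]
  ring
end
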